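/- In the theory T, no derivation changes the number of occurrences of the binary symbol m in a term: if T proves t = t', then t and t' contain the same number of occurrences of m. Moreover, every single rewrite step in a derivation over T either involves only unary symbols or is performed on a subterm whose root symbol is m. -/

import Mathlib

/-- Terms of the theory `T`: unary symbols `g x` for each letter `x` of the alphabet `Fin N`,
an extra unary symbol `al` (written α), and a binary symbol `m`, in context `x_1, ..., x_n`. -/
inductive TmT (N : ℕ) : ℕ → Type
  | var {n} : Fin n → TmT N n
  | g {n} : Fin N → TmT N n → TmT N n
  | al {n} : TmT N n → TmT N n
  | m {n} : TmT N n → TmT N n → TmT N n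

/-- A word `w` over the alphabet applied to a term as a composite of unary symbols. -/
def wApp {N n : ℕ} (w : List (Fin N)) (t : TmT N n) : TmT N n :=
  w.foldr (fun x s => TmT.g x s) t

/-- Equational provability in the theory `T` with axioms `u_i(x1) = v_i(x1)` (for `i : Fin M`,
where `u_i = ur i`, `v_i = vr i`) and `m(uα(x1), x2) = m(vα(x2), x1)`, closed under
all substitution instances and congruence. -/
inductive ProvT {N : ℕ} (M : ℕ) (ur vr : Fin M → List (Fin N)) (u v : List (Fin N)) :
    {n : ℕ} → TmT N n → TmT N n → Prop
  | refl {n} (t : TmT N n) : ProvT M ur vr u v t t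
  | symm {n} {s t : TmT N n} : ProvT M ur vr u v s t → ProvT M ur vr u v t s
  | trans {n} {s t w : TmT N n} :
      ProvT M ur vr u v s t → ProvT M ur vr u v t w → ProvT M ur vr u v s w
  | congg {n} (x : Fin N) {s t : TmT N n} :
      ProvT M ur vr u v s t → ProvT M ur vr u v (.g x s) (.g x t)
  | congal {n} {s t : TmT N n} : ProvT M ur vr u v s t → ProvT M ur vr u v (.al s) (.al t)
  | congm {n} {a a' b b' : TmT N n} : ProvT M ur vr u v a a' → ProvT M ur vr u v b b' →
      ProvT M ur vr u v (.m a b) (.m a' b')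
  | axu {n} (i : Fin M) (t : TmT N n) : ProvT M ur vr u v (wApp (ur i) t) (wApp (vr i) t)
  | axm {n} (t₁ t₂ : TmT N n) :
      ProvT M ur vr u v (.m (wApp u (.al t₁)) t₂) (.m (wApp v (.al t₂)) t₁)

/-- The number of occurrences of the binary symbol `m` in a term. -/
def countM {N n : ℕ} : TmT N n → ℕ
  | .var _ => 0
  | .g _ t => countM t
  | .al t => countM t
  | .m a b => countM a + countM b + 1

/-- A redex step: the replacement of a substitution instance of one side of an axiom of
`T` by the corresponding instance of the other side (at the root). -/
inductive Redex {N : ℕ} (M : ℕ) (ur vr : Fin M → List (Fin N)) (u v : List (Fin N)) :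
    {n : ℕ} → TmT N n → TmT N n → Prop
  | axu {n} (i : Fin M) (t : TmT N n) : Redex M ur vr u v (wApp (ur i) t) (wApp (vr i) t)
  | axu' {n} (i : Fin M) (t : TmT N n) : Redex M ur vr u v (wApp (vr i) t) (wApp (ur i) t)
  | axm {n} (t₁ t₂ : TmT N n) :
      Redex M ur vr u v (.m (wApp u (.al t₁)) t₂) (.m (wApp v (.al t₂)) t₁)
  | axm' {n} (t₁ t₂ : TmT N n) :
      Redex M ur vr u v (.m (wApp v (.al t₂)) t₁) (.m (wApp u (.al t₁)) t₂)

/-- A single rewrite step over `T`: a redex applied at some position of a term. -/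
inductive Step {N : ℕ} (M : ℕ) (ur vr : Fin M → List (Fin N)) (u v : List (Fin N)) :
    {n : ℕ} → TmT N n → TmT N n → Prop
  | redex {n} {t t' : TmT N n} : Redex M ur vr u v t t' → Step M ur vr u v t t'
  | underG {n} (x : Fin N) {t t' : TmT N n} :
      Step M ur vr u v t t' → Step M ur vr u v (.g x t) (.g x t')
  | underAl {n} {t t' : TmT N n} :
      Step M ur vr u v t t' → Step M ur vr u v (.al t) (.al t')
  | left {n} {t t' s : TmT N n} :
      Step M ur vr u v t t' → Step M ur vr u v (.m t s) (.m t' s)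
  | right {n} {t s s' : TmT N n} :
      Step M ur vr u v s s' → Step M ur vr u v (.m t s) (.m t s')

/-! Both sides of every axiom carry the same number of `m`s: a word of unary symbols adds none,
and the two sides of the `m`-axiom each have one root `m` over the same two subterms, swapped.
Hence `countM` is invariant under congruence closure. -/

@[simp]
theorem countM_wApp {N n : ℕ} (w : List (Fin N)) (t : TmT N n) :
    countM (wApp w t) = countM t := by
  induction w with
  | nil => rfl
  | cons x xs ih => simpa only [wApp, List.foldr_cons, countM] using ih

section

variable {N M : ℕ} {ur vr : Fin M → List (Fin N)} {u v : List (Fin N)}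

theorem ProvT.countM_eq {n : ℕ} {t t' : TmT N n} (h : ProvT M ur vr u v t t') :
    countM t = countM t' := by
  induction h with
  | refl => rfl
  | symm _ ih => exact ih.symm
  | trans _ _ ih₁ ih₂ => exact ih₁.trans ih₂
  | congg _ _ ih => simpa only [countM] using ih
  | congal _ ih => simpa only [countM] using ih
  | congm _ _ ih₁ ih₂ => simp only [countM, ih₁, ih₂]
  | axu => simp only [countM_wApp]
  | axm => simp only [countM, countM_wApp]; omega

theorem Redex.unary_or_root_m {n : ℕ} {t t' : TmT N n} (h : Redex M ur vr u v t t') :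
    (∃ (i : Fin M) (s : TmT N n),
        (t = wApp (ur i) s ∧ t' = wApp (vr i) s) ∨ (t = wApp (vr i) s ∧ t' = wApp (ur i) s)) ∨
      ((∃ a b, t = TmT.m a b) ∧ (∃ a b, t' = TmT.m a b)) := by
  cases h with
  | axu i s => exact .inl ⟨i, s, .inl ⟨rfl, rfl⟩⟩
  | axu' i s => exact .inl ⟨i, s, .inr ⟨rfl, rfl⟩⟩
  | axm | axm' => exact .inr ⟨⟨_, _, rfl⟩, ⟨_, _, rfl⟩⟩

end

theorem m_count_invariant {N M : ℕ} (ur vr : Fin M → List (Fin N)) (u v : List (Fin N)) :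
    (∀ (n : ℕ) (t t' : TmT N n), ProvT M ur vr u v t t' → countM t = countM t') ∧
    (∀ (n : ℕ) (t t' : TmT N n), Redex M ur vr u v t t' →
      (∃ (i : Fin M) (s : TmT N n),
          (t = wApp (ur i) s ∧ t' = wApp (vr i) s) ∨ (t = wApp (vr i) s ∧ t' = wApp (ur i) s)) ∨
      ((∃ a b, t = TmT.m a b) ∧ (∃ a b, t' = TmT.m a b))) :=
  ⟨fun _ _ _ => ProvT.countM_eq, fun _ _ _ => Redex.unary_or_root_m⟩
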